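/- Let {τ_n}_{n≥1} be piecewise expanding maps of [0,1] (each piecewise strictly monotone and C² on the intervals of a finite partition, with |τ_n'| ≥ s > 1 on each piece), converging uniformly to a map τ, and assume all τ_n satisfy the Lasota–Yorke inequality V(P_{τ_n} f) ≤ A·V(f) + B·∫|f| dm with common constants 0 ≤ A < 1 and B. Then for every density f of bounded variation on [0,1], the sequence of Cesàro averages f_n = (1/n) Σ_{i=1}^n P_{τ_{(1,i)}} f, where τ_{(1,i)} = τ_i ∘ ⋯ ∘ τ_1, is uniformly bounded and of uniformly bounded variation, and hence forms a precompact set in L¹([0,1], m). -/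

import Mathlib

open MeasureTheory Filter Topology
open scoped ENNReal

/-- Lebesgue measure on `[0,1]`. -/
noncomputable def m : Measure ℝ := volume.restrict (Set.Icc 0 1)

/-- `T : [0,1] → [0,1]` is piecewise expanding: there is a partition
`0 = a_0 < ⋯ < a_r = 1` such that on each open interval `(a_{i-1}, a_i)` the map `T`
is strictly monotone and `C²` with `|T'| ≥ s` there. -/
def PiecewiseExpanding (T : ℝ → ℝ) (s : ℝ) : Prop :=
  ∃ (r : ℕ) (a : ℕ → ℝ), 0 < r ∧ a 0 = 0 ∧ a r = 1 ∧
    (∀ i < r, a i < a (i + 1)) ∧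
    ∀ i < r,
      (StrictMonoOn T (Set.Ioo (a i) (a (i + 1))) ∨
        StrictAntiOn T (Set.Ioo (a i) (a (i + 1)))) ∧
      ContDiffOn ℝ 2 T (Set.Ioo (a i) (a (i + 1))) ∧
      ∀ x ∈ Set.Ioo (a i) (a (i + 1)),
        s ≤ |derivWithin T (Set.Ioo (a i) (a (i + 1))) x|

/-- `g` is a version of the Frobenius–Perron image of `f` under `T`:
`∫_A g dm = ∫_{T⁻¹(A)} f dm` for every Borel set `A`. -/
def IsFPImage (T : ℝ → ℝ) (f g : ℝ → ℝ) : Prop :=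
  ∀ A : Set ℝ, MeasurableSet A → ∫ x in A, g x ∂m = ∫ x in T ⁻¹' A, f x ∂m

/-- `opComp P n f = (P_n ∘ P_{n-1} ∘ ⋯ ∘ P_1) f` (with `opComp P 0 f = f`),
so `opComp P n f` represents `P_{τ_{(1,n)}} f = P_{τ_n} ⋯ P_{τ_1} f`. -/
def opComp (P : ℕ → (ℝ → ℝ) → (ℝ → ℝ)) : ℕ → (ℝ → ℝ) → (ℝ → ℝ)
  | 0 => fun f => f
  | n + 1 => fun f => P (n + 1) (opComp P n f)

/-!
Each `P_{τ_n}` preserves positivity and mass, so on densities the Lasota–Yorke inequality reads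
`V(P g) ≤ A V(g) + |B|`. Hence the densities of variation at most `K = V(f) + |B| / (1 - A)`,
for which `A K + |B| ≤ K`, are mapped into themselves and contain every `P_{τ_{(1,i)}} f`.
A density of variation `≤ K` is bounded by `1 + K`, and both bounds pass to Cesàro averages.

Precompactness is Helly's selection theorem in `L¹`: sampling `g` on the grid of mesh `1/n`
gives a step function within `V(g)/n` of `g` in `L¹`, and the step functions with values in
`[-C, C]` form a compact finite-dimensional family, so the functions bounded by `C` with
variation `≤ C` form a totally bounded subset of the complete space `L¹`.
-/

open Set

instance : IsProbabilityMeasure m :=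
  ⟨by simp [m]⟩

lemma ae_mem_Icc_m : ∀ᵐ x ∂m, x ∈ Icc (0 : ℝ) 1 :=
  ae_restrict_mem measurableSet_Icc

section Variation

variable {α : Type*} [LinearOrder α]

lemma eVariationOn_add_le {E : Type*} [SeminormedAddCommGroup E] (f g : α → E) (s : Set α) :
    eVariationOn (f + g) s ≤ eVariationOn f s + eVariationOn g s := by
  refine iSup_le fun ⟨n, u, hu, us⟩ => ?_
  calc ∑ i ∈ Finset.range n, edist ((f + g) (u (i + 1))) ((f + g) (u i))
      ≤ ∑ i ∈ Finset.range n,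
          (edist (f (u (i + 1))) (f (u i)) + edist (g (u (i + 1))) (g (u i))) :=
        Finset.sum_le_sum fun i _ => edist_add_add_le _ _ _ _
    _ ≤ eVariationOn f s + eVariationOn g s := by
        rw [Finset.sum_add_distrib]
        exact add_le_add (eVariationOn.sum_le hu us) (eVariationOn.sum_le hu us)

lemma eVariationOn_sum_le {E ι : Type*} [SeminormedAddCommGroup E] (t : Finset ι)
    (F : ι → α → E) (s : Set α) :
    eVariationOn (∑ i ∈ t, F i) s ≤ ∑ i ∈ t, eVariationOn (F i) s := by
  classical
  induction t using Finset.induction_on with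
  | empty =>
      simp only [Finset.sum_empty, nonpos_iff_eq_zero]
      exact (eVariationOn.eq_zero_iff _).2 fun _ _ _ _ => by simp
  | insert a t ha ih =>
      rw [Finset.sum_insert ha, Finset.sum_insert ha]
      exact (eVariationOn_add_le _ _ s).trans (add_le_add le_rfl ih)

lemma eVariationOn_const_smul_le {F : Type*} [NormedAddCommGroup F] [NormedSpace ℝ F]
    (c : ℝ) (f : α → F) (s : Set α) :
    eVariationOn (c • f) s ≤ ‖c‖ₑ * eVariationOn f s := by
  have h := eVariationOn_fun_smul_le (f := fun _ => c) (g := f) (s := s)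
    (fun _ _ => le_rfl) (fun _ _ => le_top)
  have hc : eVariationOn (fun _ => c) s = 0 :=
    (eVariationOn.eq_zero_iff _).2 fun _ _ _ _ => edist_self c
  rwa [hc, mul_zero, add_zero] at h

end Variation

lemma BoundedVariationOn.aemeasurable_restrict {f : ℝ → ℝ} {s : Set ℝ} (hs : MeasurableSet s)
    (hf : BoundedVariationOn f s) (μ : Measure ℝ) : AEMeasurable f (μ.restrict s) := by
  obtain ⟨p, q, hp, hq, rfl⟩ := hf.locallyBoundedVariationOn.exists_monotoneOn_sub_monotoneOn
  exact (aemeasurable_restrict_of_monotoneOn hs hp).sub (aemeasurable_restrict_of_monotoneOn hs hq)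

section UnitInterval

variable {g : ℝ → ℝ}

lemma BoundedVariationOn.integrable_m (hg : BoundedVariationOn g (Icc 0 1)) : Integrable g m := by
  refine Integrable.of_bound (hg.aemeasurable_restrict measurableSet_Icc _).aestronglyMeasurable
    (|g 0| + (eVariationOn g (Icc 0 1)).toReal) ?_
  filter_upwards [ae_mem_Icc_m] with x hx
  have := hg.dist_le hx (left_mem_Icc.2 zero_le_one)
  rw [Real.norm_eq_abs]
  linarith [abs_sub_abs_le_abs_sub (g x) (g 0), Real.dist_eq (g x) (g 0)]

lemma BoundedVariationOn.abs_le_integral_add (hg : BoundedVariationOn g (Icc 0 1)) {x : ℝ}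
    (hx : x ∈ Icc (0 : ℝ) 1) : |g x| ≤ ∫ y, |g y| ∂m + (eVariationOn g (Icc 0 1)).toReal := by
  have hle : ∀ᵐ y ∂m, |g x| - (eVariationOn g (Icc 0 1)).toReal ≤ |g y| := by
    filter_upwards [ae_mem_Icc_m] with y hy
    linarith [hg.dist_le hx hy, Real.dist_eq (g x) (g y), abs_sub_abs_le_abs_sub (g x) (g y)]
  simpa [sub_le_iff_le_add] using integral_mono_ae (integrable_const _) hg.integrable_m.abs hle

-- The integral telescopes to `∫_{1-h}^1 W - ∫_{-h}^0 W`.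
lemma Monotone.integral_sub_comp_sub_le {W : ℝ → ℝ} (hW : Monotone W) {V h : ℝ} (hh : 0 ≤ h)
    (hW0 : ∀ t, 0 ≤ W t) (hWV : ∀ t, W t ≤ V) : ∫ x, W x - W (x - h) ∂m ≤ h * V := by
  have hWh : Monotone fun x => W (x - h) := fun a b hab => hW (sub_le_sub_right hab h)
  have hint : ∀ a b, IntervalIntegrable W volume a b := fun _ _ => hW.intervalIntegrable
  have htop : ∫ x in (1 - h)..1, W x ≤ h * V := by
    have := intervalIntegral.norm_integral_le_of_norm_le_const (a := 1 - h) (b := 1)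
      fun t _ => (Real.norm_of_nonneg (hW0 t)).trans_le (hWV t)
    rw [Real.norm_eq_abs, sub_sub_cancel, abs_of_nonneg hh] at this
    linarith [le_abs_self (∫ x in (1 - h)..1, W x)]
  have hbot : 0 ≤ ∫ x in -h..0, W x :=
    intervalIntegral.integral_nonneg (by linarith) fun t _ => hW0 t
  calc ∫ x, W x - W (x - h) ∂m = (∫ x in (0 : ℝ)..1, W x) - ∫ x in (0 - h)..(1 - h), W x := by
        rw [← intervalIntegral.integral_comp_sub_right, ← intervalIntegral.integral_sub (hint _ _)
          hWh.intervalIntegrable, intervalIntegral.integral_of_le zero_le_one,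
          ← integral_Icc_eq_integral_Ioc]
        rfl
    _ = (∫ x in (1 - h)..1, W x) - ∫ x in -h..0, W x := by
        rw [intervalIntegral.integral_interval_sub_interval_comm (hint _ _) (hint _ _) (hint _ _),
          intervalIntegral.integral_symm (1 - h), intervalIntegral.integral_symm 0, zero_sub]
        ring
    _ ≤ h * V := by linarith

noncomputable def variationUpTo (g : ℝ → ℝ) : ℝ → ℝ :=
  IccExtend zero_le_one fun t : Icc (0 : ℝ) 1 => variationOnFromTo g (Icc 0 1) 0 t

lemma monotone_variationUpTo (hg : BoundedVariationOn g (Icc 0 1)) :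
    Monotone (variationUpTo g) :=
  Monotone.IccExtend _ fun a b hab =>
    variationOnFromTo.monotoneOn hg.locallyBoundedVariationOn (left_mem_Icc.2 zero_le_one)
      a.2 b.2 hab

lemma BoundedVariationOn.integral_abs_sub_comp_le (hg : BoundedVariationOn g (Icc 0 1))
    {h : ℝ} (hh : 0 ≤ h) {r : ℝ → ℝ}
    (hr : ∀ x ∈ Icc (0 : ℝ) 1, r x ∈ Icc (0 : ℝ) 1 ∧ x - h ≤ r x ∧ r x ≤ x) :
    ∫ x, |g x - g (r x)| ∂m ≤ h * (eVariationOn g (Icc 0 1)).toReal := by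
  set W := variationUpTo g
  have hW : Monotone W := monotone_variationUpTo hg
  have hpt : ∀ x ∈ Icc (0 : ℝ) 1, |g x - g (r x)| ≤ W x - W (x - h) := by
    intro x hx
    obtain ⟨hrx, hxh, hrle⟩ := hr x hx
    have := variationOnFromTo.abs_sub_le_sub_of_le hg.locallyBoundedVariationOn
      (left_mem_Icc.2 zero_le_one) hrx hx hrle
    have hWx : W x = variationOnFromTo g (Icc 0 1) 0 x := IccExtend_of_mem _ _ hx
    have hWr : W (r x) = variationOnFromTo g (Icc 0 1) 0 (r x) := IccExtend_of_mem _ _ hrx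
    linarith [hW hxh]
  refine (integral_mono_of_nonneg (ae_of_all _ fun _ => abs_nonneg _) ?_
    (ae_mem_Icc_m.mono hpt)).trans (hW.integral_sub_comp_sub_le hh ?_ ?_)
  · have hWh : Monotone fun x => W (x - h) := fun a b hab => hW (sub_le_sub_right hab h)
    exact ((hW.monotoneOn _).integrableOn_isCompact isCompact_Icc).sub
      ((hWh.monotoneOn _).integrableOn_isCompact isCompact_Icc)
  · exact fun t => variationOnFromTo.nonneg_of_le _ _ (projIcc (0 : ℝ) 1 zero_le_one t).2.1
  · exact fun t => (le_abs_self _).trans (variationOnFromTo.abs_le_eVariationOn hg)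

/-- The step function with value `c i` on `[i/n, (i+1)/n)`, and `c n` from `1` on. -/
noncomputable def gridStep (n : ℕ) (c : Fin (n + 1) → ℝ) (x : ℝ) : ℝ :=
  c (Fin.clamp ⌊x * n⌋₊ n)

lemma integrable_gridStep (n : ℕ) (c : Fin (n + 1) → ℝ) : Integrable (gridStep n c) m :=
  Integrable.of_bound ((measurable_of_countable fun k => c (Fin.clamp k n)).comp
    (Nat.measurable_floor.comp (measurable_id.mul_const _))).aestronglyMeasurable ‖c‖
    (ae_of_all _ fun _ => norm_le_pi_norm c _)

lemma BoundedVariationOn.integral_abs_sub_gridStep_le (hg : BoundedVariationOn g (Icc 0 1))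
    {n : ℕ} (hn : 0 < n) :
    ∫ x, |g x - gridStep n (fun i => g (i / n)) x| ∂m ≤
      (eVariationOn g (Icc 0 1)).toReal / n := by
  have hn0 : (0 : ℝ) < n := by exact_mod_cast hn
  have hgrid : ∀ x ∈ Icc (0 : ℝ) 1, gridStep n (fun i => g (i / n)) x = g (⌊x * n⌋₊ / n) := by
    intro x hx
    have : ⌊x * n⌋₊ ≤ n := Nat.floor_le_of_le (by nlinarith [hx.2])
    simp [gridStep, Fin.clamp, this]
  have hr : ∀ x ∈ Icc (0 : ℝ) 1, (⌊x * n⌋₊ / n : ℝ) ∈ Icc (0 : ℝ) 1 ∧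
      x - 1 / n ≤ ⌊x * n⌋₊ / n ∧ (⌊x * n⌋₊ / n : ℝ) ≤ x := by
    intro x hx
    have hfloor : (⌊x * n⌋₊ : ℝ) ≤ x * n := Nat.floor_le (mul_nonneg hx.1 hn0.le)
    have hfloor' : x * n < ⌊x * n⌋₊ + 1 := Nat.lt_floor_add_one _
    have hle : (⌊x * n⌋₊ / n : ℝ) ≤ x := by rwa [div_le_iff₀ hn0]
    refine ⟨⟨by positivity, hle.trans hx.2⟩, ?_, hle⟩
    rw [sub_le_iff_le_add, ← add_div, le_div_iff₀ hn0]
    linarith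
  calc ∫ x, |g x - gridStep n (fun i => g (i / n)) x| ∂m
      = ∫ x, |g x - g (⌊x * n⌋₊ / n)| ∂m :=
        integral_congr_ae (ae_mem_Icc_m.mono fun x hx => by simp only [hgrid x hx])
    _ ≤ 1 / n * (eVariationOn g (Icc 0 1)).toReal := hg.integral_abs_sub_comp_le (by positivity) hr
    _ = _ := by ring

end UnitInterval

lemma L1.dist_eq_integral_abs_sub {α : Type*} [MeasurableSpace α] {μ : Measure α}
    {F G : α →₁[μ] ℝ} {f g : α → ℝ} (hF : F =ᵐ[μ] f) (hG : G =ᵐ[μ] g) :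
    dist F G = ∫ x, |f x - g x| ∂μ := by
  rw [L1.dist_eq_integral_dist]
  refine integral_congr_ae ?_
  filter_upwards [hF, hG] with x hFx hGx
  rw [hFx, hGx, Real.dist_eq]

lemma lipschitzWith_toL1_gridStep (n : ℕ) :
    LipschitzWith 1 fun c => (integrable_gridStep n c).toL1 := by
  refine LipschitzWith.of_dist_le_mul fun c c' => ?_
  rw [L1.dist_eq_integral_abs_sub (integrable_gridStep n c).coeFn_toL1
    (integrable_gridStep n c').coeFn_toL1, NNReal.coe_one, one_mul]
  calc ∫ x, |gridStep n c x - gridStep n c' x| ∂m ≤ ∫ _, dist c c' ∂m :=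
        integral_mono_of_nonneg (ae_of_all _ fun _ => abs_nonneg _) (integrable_const _)
          (ae_of_all _ fun x => by
            simpa [gridStep, Real.dist_eq, dist_pi_le_iff] using dist_le_pi_dist c c' _)
    _ = dist c c' := by simp

lemma totallyBounded_of_approx {α : Type*} [PseudoMetricSpace α] {s : Set α}
    (h : ∀ ε > 0, ∃ t, TotallyBounded t ∧ ∀ x ∈ s, ∃ y ∈ t, dist x y < ε) :
    TotallyBounded s := by
  refine Metric.totallyBounded_iff.2 fun ε hε => ?_
  obtain ⟨t, ht, hst⟩ := h (ε / 2) (by positivity)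
  obtain ⟨u, hu, htu⟩ := Metric.totallyBounded_iff.1 ht (ε / 2) (by positivity)
  refine ⟨u, hu, fun x hx => ?_⟩
  obtain ⟨y, hy, hxy⟩ := hst x hx
  obtain ⟨z, hz, hyz⟩ := mem_iUnion₂.1 (htu hy)
  exact mem_iUnion₂.2
    ⟨z, hz, Metric.mem_ball.2 (by linarith [dist_triangle x y z, Metric.mem_ball.1 hyz])⟩

def IsBVBounded (C : ℝ) (g : ℝ → ℝ) : Prop :=
  (∀ x ∈ Icc (0 : ℝ) 1, |g x| ≤ C) ∧ eVariationOn g (Icc 0 1) ≤ ENNReal.ofReal C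

namespace IsBVBounded

variable {C : ℝ} {g : ℝ → ℝ}

lemma boundedVariationOn (hg : IsBVBounded C g) : BoundedVariationOn g (Icc 0 1) :=
  ne_top_of_le_ne_top ENNReal.ofReal_ne_top hg.2

lemma nonneg (hg : IsBVBounded C g) : 0 ≤ C :=
  (abs_nonneg _).trans (hg.1 0 (left_mem_Icc.2 zero_le_one))

lemma toReal_eVariationOn_le (hg : IsBVBounded C g) : (eVariationOn g (Icc 0 1)).toReal ≤ C :=
  ENNReal.toReal_le_of_le_ofReal hg.nonneg hg.2

lemma average {ι : Type*} {t : Finset ι} (ht : t.Nonempty) {F : ι → ℝ → ℝ}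
    (hF : ∀ i ∈ t, IsBVBounded C (F i)) :
    IsBVBounded C fun x => 1 / (t.card : ℝ) * ∑ i ∈ t, F i x := by
  have hcard : (0 : ℝ) < t.card := by exact_mod_cast ht.card_pos
  constructor
  · intro x hx
    rw [abs_mul, abs_of_pos (by positivity), one_div_mul_eq_div, div_le_iff₀' hcard]
    calc |∑ i ∈ t, F i x| ≤ ∑ i ∈ t, |F i x| := Finset.abs_sum_le_sum_abs _ _
      _ ≤ ∑ _i ∈ t, C := Finset.sum_le_sum fun i hi => (hF i hi).1 x hx
      _ = t.card * C := by rw [Finset.sum_const, nsmul_eq_mul]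
  · have hfun : (fun x => 1 / (t.card : ℝ) * ∑ i ∈ t, F i x) =
        (1 / (t.card : ℝ)) • ∑ i ∈ t, F i := by
      ext x
      simp [Finset.sum_apply]
    rw [hfun]
    calc eVariationOn ((1 / (t.card : ℝ)) • ∑ i ∈ t, F i) (Icc 0 1)
        ≤ ‖1 / (t.card : ℝ)‖ₑ * ∑ i ∈ t, eVariationOn (F i) (Icc 0 1) :=
          (eVariationOn_const_smul_le _ _ _).trans
            (mul_le_mul_right (eVariationOn_sum_le _ _ _) _)
      _ ≤ ‖1 / (t.card : ℝ)‖ₑ * ∑ _i ∈ t, ENNReal.ofReal C :=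
          mul_le_mul_right (Finset.sum_le_sum fun i hi => (hF i hi).2) _
      _ = ENNReal.ofReal C := by
          rw [Finset.sum_const, nsmul_eq_mul, ← mul_assoc, one_div, enorm_inv hcard.ne',
            Real.enorm_natCast, ENNReal.inv_mul_cancel (by simpa using ht.card_pos.ne')
            (ENNReal.natCast_ne_top _), one_mul]

end IsBVBounded

def bvBoundedL1 (C : ℝ) : Set (ℝ →₁[m] ℝ) :=
  {F | ∃ g, IsBVBounded C g ∧ F =ᵐ[m] g}

theorem totallyBounded_bvBoundedL1 (C : ℝ) : TotallyBounded (bvBoundedL1 C) := by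
  refine totallyBounded_of_approx fun ε hε => ?_
  obtain ⟨N, hN⟩ := exists_nat_gt (C / ε)
  set n := N + 1
  have hn : (0 : ℝ) < n := by positivity
  refine ⟨(fun c => (integrable_gridStep n c).toL1) '' univ.pi fun _ => Icc (-C) C,
    ((isCompact_univ_pi fun _ => isCompact_Icc).image
      (lipschitzWith_toL1_gridStep n).continuous).totallyBounded, ?_⟩
  rintro F ⟨g, hg, hFg⟩
  refine ⟨_, mem_image_of_mem _ (x := fun i : Fin (n + 1) => g (i / n)) ?_, ?_⟩
  · refine fun i _ => abs_le.1 (hg.1 _ ⟨by positivity, div_le_one_of_le₀ ?_ hn.le⟩)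
    exact_mod_cast Nat.lt_succ_iff.1 i.2
  · rw [L1.dist_eq_integral_abs_sub hFg (integrable_gridStep n _).coeFn_toL1]
    refine (hg.boundedVariationOn.integral_abs_sub_gridStep_le N.succ_pos).trans_lt ?_
    have hC : C < ε * n := by
      rw [div_lt_iff₀ hε] at hN
      push_cast [n]
      nlinarith
    rw [div_lt_iff₀ hn]
    linarith [hg.toReal_eVariationOn_le]

theorem exists_subseq_tendsto_of_isBVBounded {C : ℝ} {g : ℕ → ℝ → ℝ}
    (hg : ∀ k, IsBVBounded C (g k)) :
    ∃ ψ : ℕ → ℕ, StrictMono ψ ∧ ∃ G : ℝ → ℝ, Integrable G m ∧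
      Tendsto (fun k => ∫ x, |g (ψ k) x - G x| ∂m) atTop (𝓝 0) := by
  have hint : ∀ k, Integrable (g k) m := fun k => (hg k).boundedVariationOn.integrable_m
  have hmem : ∀ k, (hint k).toL1 ∈ closure (bvBoundedL1 C) :=
    fun k => subset_closure ⟨g k, hg k, (hint k).coeFn_toL1⟩
  obtain ⟨G, -, ψ, hψ, hlim⟩ := ((totallyBounded_bvBoundedL1 C).closure.isCompact_of_isClosed
    isClosed_closure).tendsto_subseq hmem
  refine ⟨ψ, hψ, G, L1.integrable_coeFn G, ?_⟩
  refine (tendsto_iff_dist_tendsto_zero.1 hlim).congr fun k => ?_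
  exact L1.dist_eq_integral_abs_sub (hint (ψ k)).coeFn_toL1 EventuallyEq.rfl

lemma IsFPImage.integral_eq {T f g : ℝ → ℝ} (h : IsFPImage T f g) :
    ∫ x, g x ∂m = ∫ x, f x ∂m := by
  simpa using h univ MeasurableSet.univ

lemma IsFPImage.ae_nonneg {T f g : ℝ → ℝ} (h : IsFPImage T f g) (hg : Integrable g m)
    (hf : 0 ≤ᵐ[m] f) : 0 ≤ᵐ[m] g :=
  ae_nonneg_of_forall_setIntegral_nonneg hg fun t ht _ => by
    rw [h t ht]
    exact integral_nonneg_of_ae (ae_restrict_of_ae hf)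

def IsBVDensity (K : ℝ) (g : ℝ → ℝ) : Prop :=
  0 ≤ᵐ[m] g ∧ ∫ x, g x ∂m = 1 ∧ eVariationOn g (Icc 0 1) ≤ ENNReal.ofReal K

namespace IsBVDensity

variable {K : ℝ} {g : ℝ → ℝ}

lemma integral_abs (hg : IsBVDensity K g) : ∫ x, |g x| ∂m = 1 := by
  rw [← hg.2.1]
  exact integral_congr_ae (hg.1.mono fun x hx => abs_of_nonneg hx)

lemma isBVBounded (hK : 0 ≤ K) (hg : IsBVDensity K g) : IsBVBounded (1 + K) g := by
  have hbv : BoundedVariationOn g (Icc 0 1) := ne_top_of_le_ne_top ENNReal.ofReal_ne_top hg.2.2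
  refine ⟨fun x hx => (hbv.abs_le_integral_add hx).trans ?_,
    hg.2.2.trans (ENNReal.ofReal_le_ofReal (by linarith))⟩
  rw [hg.integral_abs]
  linarith [ENNReal.toReal_le_of_le_ofReal hK hg.2.2]

lemma of_isFPImage {A B : ℝ} (hK : 0 ≤ K) (hA : 0 ≤ A) (hAK : A * K + |B| ≤ K)
    {T h : ℝ → ℝ} (hg : IsBVDensity K g) (hFP : IsFPImage T g h)
    (hLY : eVariationOn h (Icc 0 1) ≤
      ENNReal.ofReal A * eVariationOn g (Icc 0 1) + ENNReal.ofReal (B * ∫ x, |g x| ∂m)) :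
    IsBVDensity K h := by
  have hvar : eVariationOn h (Icc 0 1) ≤ ENNReal.ofReal K := by
    refine hLY.trans ?_
    rw [hg.integral_abs, mul_one]
    calc ENNReal.ofReal A * eVariationOn g (Icc 0 1) + ENNReal.ofReal B
        ≤ ENNReal.ofReal A * ENNReal.ofReal K + ENNReal.ofReal |B| :=
          add_le_add (mul_le_mul_right hg.2.2 _) (ENNReal.ofReal_le_ofReal (le_abs_self B))
      _ = ENNReal.ofReal (A * K + |B|) := by
          rw [ENNReal.ofReal_add (by positivity) (abs_nonneg B), ENNReal.ofReal_mul hA]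
      _ ≤ ENNReal.ofReal K := ENNReal.ofReal_le_ofReal hAK
  have hint : Integrable h m :=
    BoundedVariationOn.integrable_m (ne_top_of_le_ne_top ENNReal.ofReal_ne_top hvar)
  exact ⟨hFP.ae_nonneg hint hg.1, hFP.integral_eq.trans hg.2.1, hvar⟩

end IsBVDensity

lemma isBVDensity_opComp {K A B : ℝ} (hK : 0 ≤ K) (hA : 0 ≤ A) (hAK : A * K + |B| ≤ K)
    {τseq : ℕ → ℝ → ℝ} {P : ℕ → (ℝ → ℝ) → (ℝ → ℝ)}
    (hP : ∀ n, 1 ≤ n → ∀ g : ℝ → ℝ, Integrable g m → IsFPImage (τseq n) g (P n g))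
    (hLY : ∀ n, 1 ≤ n → ∀ g : ℝ → ℝ, BoundedVariationOn g (Icc 0 1) →
      eVariationOn (P n g) (Icc 0 1) ≤
        ENNReal.ofReal A * eVariationOn g (Icc 0 1) + ENNReal.ofReal (B * ∫ x, |g x| ∂m))
    {f : ℝ → ℝ} (hf : IsBVDensity K f) (i : ℕ) : IsBVDensity K (opComp P i f) := by
  induction i with
  | zero => exact hf
  | succ i ih =>
      have hbv : BoundedVariationOn (opComp P i f) (Icc 0 1) :=
        ne_top_of_le_ne_top ENNReal.ofReal_ne_top ih.2.2
      exact ih.of_isFPImage hK hA hAK (hP _ i.succ_pos _ hbv.integrable_m)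
        (hLY _ i.succ_pos _ hbv)

theorem cesaro_averages_precompact_general
    (τseq : ℕ → ℝ → ℝ)
    (P : ℕ → (ℝ → ℝ) → (ℝ → ℝ))
    (hP : ∀ n, 1 ≤ n → ∀ g : ℝ → ℝ, Integrable g m → IsFPImage (τseq n) g (P n g))
    (A B : ℝ) (hA0 : 0 ≤ A) (hA1 : A < 1)
    (hLY : ∀ n, 1 ≤ n → ∀ g : ℝ → ℝ, BoundedVariationOn g (Set.Icc 0 1) →
      eVariationOn (P n g) (Set.Icc 0 1) ≤
        ENNReal.ofReal A * eVariationOn g (Set.Icc 0 1)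
          + ENNReal.ofReal (B * ∫ x, |g x| ∂m))
    (f : ℝ → ℝ) (hfbv : BoundedVariationOn f (Set.Icc 0 1))
    (hf0 : ∀ x, 0 ≤ f x) (hf1 : ∫ x, f x ∂m = 1)
    (fseq : ℕ → ℝ → ℝ)
    (hfseq : ∀ n x, fseq n x = (1 / (n : ℝ)) * ∑ i ∈ Finset.Icc 1 n, opComp P i f x) :
    (∃ C : ℝ, ∀ n, 1 ≤ n →
      (∀ x ∈ Set.Icc (0 : ℝ) 1, |fseq n x| ≤ C) ∧
      eVariationOn (fseq n) (Set.Icc 0 1) ≤ ENNReal.ofReal C) ∧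
    ∀ φ : ℕ → ℕ, StrictMono φ → (∀ k, 1 ≤ φ k) →
      ∃ ψ : ℕ → ℕ, StrictMono ψ ∧ ∃ g : ℝ → ℝ, Integrable g m ∧
        Tendsto (fun k => ∫ x, |fseq (φ (ψ k)) x - g x| ∂m) atTop (𝓝 0) := by
  set V := (eVariationOn f (Icc 0 1)).toReal
  set K := V + |B| / (1 - A)
  have h1A : 0 < 1 - A := by linarith
  have hV : 0 ≤ V := ENNReal.toReal_nonneg
  have hK : 0 ≤ K := by positivity
  have hAK : A * K + |B| ≤ K := by
    have : (1 - A) * K = (1 - A) * V + |B| := by rw [mul_add, mul_div_cancel₀ _ h1A.ne']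
    nlinarith [mul_nonneg h1A.le hV]
  have hf : IsBVDensity K f := ⟨ae_of_all _ hf0, hf1, (ENNReal.ofReal_toReal hfbv).symm.le.trans
    (ENNReal.ofReal_le_ofReal (le_add_of_nonneg_right (by positivity)))⟩
  have hbound : ∀ n, 1 ≤ n → IsBVBounded (1 + K) (fseq n) := fun n hn => by
    simpa [funext (hfseq n)] using IsBVBounded.average ⟨1, Finset.mem_Icc.2 ⟨le_rfl, hn⟩⟩
      fun i _ => (isBVDensity_opComp hK hA0 hAK hP hLY hf i).isBVBounded hK
  exact ⟨⟨1 + K, hbound⟩, fun φ _ hφ =>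
    exists_subseq_tendsto_of_isBVBounded fun k => hbound _ (hφ k)⟩

/-- For piecewise expanding maps `τ_n ⇉ τ` whose Frobenius–Perron operators satisfy a
common Lasota–Yorke inequality, the Cesàro averages `f_n = (1/n) Σ_{i=1}^n P_{τ_{(1,i)}} f`
of any BV density `f` are uniformly bounded and of uniformly bounded variation, and
hence form a precompact set in `L¹`. -/
theorem cesaro_averages_precompact
    (s : ℝ) (hs : 1 < s)
    (τseq : ℕ → ℝ → ℝ) (τ : ℝ → ℝ)
    (hpe : ∀ n, 1 ≤ n → PiecewiseExpanding (τseq n) s)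
    (hconv : TendstoUniformlyOn τseq τ atTop (Set.Icc 0 1))
    (P : ℕ → (ℝ → ℝ) → (ℝ → ℝ))
    (hP : ∀ n, 1 ≤ n → ∀ g : ℝ → ℝ, Integrable g m → IsFPImage (τseq n) g (P n g))
    (A B : ℝ) (hA0 : 0 ≤ A) (hA1 : A < 1)
    (hLY : ∀ n, 1 ≤ n → ∀ g : ℝ → ℝ, BoundedVariationOn g (Set.Icc 0 1) →
      eVariationOn (P n g) (Set.Icc 0 1) ≤
        ENNReal.ofReal A * eVariationOn g (Set.Icc 0 1)
          + ENNReal.ofReal (B * ∫ x, |g x| ∂m))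
    (f : ℝ → ℝ) (hfbv : BoundedVariationOn f (Set.Icc 0 1))
    (hf0 : ∀ x, 0 ≤ f x) (hfint : Integrable f m) (hf1 : ∫ x, f x ∂m = 1)
    (fseq : ℕ → ℝ → ℝ)
    (hfseq : ∀ n x, fseq n x = (1 / (n : ℝ)) * ∑ i ∈ Finset.Icc 1 n, opComp P i f x) :
    (∃ C : ℝ, ∀ n, 1 ≤ n →
      (∀ x ∈ Set.Icc (0 : ℝ) 1, |fseq n x| ≤ C) ∧
      eVariationOn (fseq n) (Set.Icc 0 1) ≤ ENNReal.ofReal C) ∧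
    ∀ φ : ℕ → ℕ, StrictMono φ → (∀ k, 1 ≤ φ k) →
      ∃ ψ : ℕ → ℕ, StrictMono ψ ∧ ∃ g : ℝ → ℝ, Integrable g m ∧
        Tendsto (fun k => ∫ x, |fseq (φ (ψ k)) x - g x| ∂m) atTop (𝓝 0) :=
  cesaro_averages_precompact_general τseq P hP A B hA0 hA1 hLY f hfbv hf0 hf1 fseq hfseq
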